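/- Let T be a rooted phylogenetic X-tree, L a minimal topological lasso for T with Γ(L) a block graph, and v an interior vertex of T with associated block B_v (the unique block B with lca_T(V(B)) = v). Then the map sending each x ∈ V(B_v) to the child edge of v lying on the path from v to x is a graph isomorphism from B_v onto the child-edge graph G(L, v). -/

import Mathlib

/-!
Minimality of `L` makes every cord the only cord of `L` joining some two sibling subtrees, and
two leaves are separated by at most one vertex of `T`. So if `x ≠ y` in `B` lay below the same
child `c` of `v`, then for some `z ∈ B` outside `c` (it exists as `v` is the last common ancestor)
the cords `xz` and `yz` of the clique `B` would join the same two subtrees: the map is injective.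
If a child `d` of `v` contained no element of `B`, pick `x, y ∈ B` below two other children; the
lasso property connects `x` to the subtree of `d` and on to `y` by a path, which the edge `yx`
closes to a cycle. A cycle lies in a block, hence in a clique, so a leaf of `d` is adjacent to
both `x` and `y` and could be added to `B`, contradicting its maximality.
-/

open scoped Classical

/-- A rooted `X`-tree on vertex type `V`: a finite rooted tree encoded by a parent
function, whose leaves (the vertices with no children) are bijectively labelled by `X`. -/
structure XTree (X V : Type) where
  root : V
  parent : V → V
  parent_root : parent root = root
  reaches : ∀ v : V, ∃ n : ℕ, parent^[n] v = root
  leaf : X → V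
  leaf_inj : Function.Injective leaf
  leaf_iff : ∀ v : V, (∀ w : V, parent w = v → w = v) ↔ v ∈ Set.range leaf

namespace XTree

variable {X V : Type}

/-- The children of a vertex. -/
def children (T : XTree X V) (v : V) : Set V := {w | T.parent w = v ∧ w ≠ v}

def IsLeaf (T : XTree X V) (v : V) : Prop := v ∈ Set.range T.leaf

def Interior (T : XTree X V) (v : V) : Prop := ¬ T.IsLeaf v

/-- Phylogenetic: root has at least two children, and no non-root vertex has exactly
one child (no degree-two vertices apart from possibly the root). -/
def IsPhylo (T : XTree X V) : Prop :=
  2 ≤ (T.children T.root).ncard ∧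
    ∀ v : V, v ≠ T.root → T.Interior v → 2 ≤ (T.children v).ncard

/-- `T.Desc v w` : `w` is a descendant of `v` (or equal to `v`). -/
def Desc (T : XTree X V) (v w : V) : Prop := ∃ n : ℕ, T.parent^[n] w = v

/-- The set of leaf labels below a vertex. -/
def leafSet (T : XTree X V) (v : V) : Set X := {x | T.Desc v (T.leaf x)}

/-- `v` is the last common ancestor of the set `S` of vertices. -/
def IsLCA (T : XTree X V) (v : V) (S : Set V) : Prop :=
  (∀ w ∈ S, T.Desc v w) ∧ ∀ u : V, (∀ w ∈ S, T.Desc u w) → T.Desc u v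

/-- Not a star tree: some interior vertex other than the root. -/
def NonDegenerate (T : XTree X V) : Prop := ∃ v : V, T.Interior v ∧ v ≠ T.root

end XTree

/-- A cord: a 2-element subset of `X`. -/
def IsCord {X : Type} (c : Set X) : Prop := ∃ a b : X, a ≠ b ∧ c = {a, b}

/-- The graph `Γ(L)` with vertex set `X` and edge set `L`. -/
def cordGraph {X : Type} (L : Set (Set X)) : SimpleGraph X where
  Adj a b := a ≠ b ∧ ({a, b} : Set X) ∈ L
  symm := by
    constructor
    intro a b h
    exact ⟨Ne.symm h.1, by rw [Set.pair_comm]; exact h.2⟩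
  loopless := by constructor; intro a h; exact h.1 rfl

/-- Topological lasso, via the child-edge graph characterization: for every interior
vertex, any two distinct child subtrees are joined by a cord of `L`. -/
def XTree.IsTopoLasso {X V : Type} (T : XTree X V) (L : Set (Set X)) : Prop :=
  ∀ v c₁ c₂ : V, c₁ ∈ T.children v → c₂ ∈ T.children v → c₁ ≠ c₂ →
    ∃ a b : X, a ∈ T.leafSet c₁ ∧ b ∈ T.leafSet c₂ ∧ ({a, b} : Set X) ∈ L

/-- Set-inclusion minimal topological lasso. -/
def XTree.IsMinTopoLasso {X V : Type} (T : XTree X V) (L : Set (Set X)) : Prop :=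
  T.IsTopoLasso L ∧ ∀ L' ⊆ L, T.IsTopoLasso L' → L' = L

/-- A nonempty vertex set inducing a connected subgraph with no cut vertex. -/
def GoodSet {α : Type} (G : SimpleGraph α) (B : Set α) : Prop :=
  B.Nonempty ∧ (G.induce B).Connected ∧
    ∀ v ∈ B, (B \ {v}).Nonempty → (G.induce (B \ {v})).Connected

/-- A block: a maximal connected induced subgraph without a cut vertex. -/
def IsBlock {α : Type} (G : SimpleGraph α) (B : Set α) : Prop :=
  GoodSet G B ∧ ∀ C : Set α, GoodSet G C → B ⊆ C → B = C

/-- A block graph: every block is a clique. -/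
def IsBlockGraph {α : Type} (G : SimpleGraph α) : Prop :=
  ∀ B : Set α, IsBlock G B → G.IsClique B

/-- A cut vertex: deleting it disconnects the graph. -/
def IsCutVtx {α : Type} (G : SimpleGraph α) (v : α) : Prop :=
  ¬ (G.induce {w | w ≠ v}).Connected

/-- Claw-free: no induced `K_{1,3}`. -/
def ClawFree {α : Type} (G : SimpleGraph α) : Prop :=
  ¬ ∃ v a b c : α, a ≠ b ∧ a ≠ c ∧ b ≠ c ∧
    G.Adj v a ∧ G.Adj v b ∧ G.Adj v c ∧ ¬ G.Adj a b ∧ ¬ G.Adj a c ∧ ¬ G.Adj b c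

/-- The child-edge graph `G(L,v)`: vertices are the children of `v` (equivalently
the child edges of `v`), two of them adjacent if a cord of `L` joins their subtrees. -/
def childGraph {X V : Type} (T : XTree X V) (L : Set (Set X)) (v : V) :
    SimpleGraph {c : V // c ∈ T.children v} where
  Adj c₁ c₂ := c₁ ≠ c₂ ∧ ∃ a b : X,
    a ∈ T.leafSet (c₁ : V) ∧ b ∈ T.leafSet (c₂ : V) ∧ ({a, b} : Set X) ∈ L
  symm := by
    constructor
    rintro c₁ c₂ ⟨h, a, b, ha, hb, hm⟩
    exact ⟨Ne.symm h, b, a, hb, ha, by rw [Set.pair_comm]; exact hm⟩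
  loopless := by constructor; rintro c ⟨h, -⟩; exact h rfl

/-- `cl(T)`: the clusters of non-root interior vertices. -/
def clSet {X V : Type} (T : XTree X V) : Set (Set X) :=
  {A | ∃ v : V, v ≠ T.root ∧ T.Interior v ∧ A = T.leafSet v}

/-- A cluster marker map for `T` and the ordering of `X`:
`f A` is the `σ`-least element of `A` not used as marker of a proper subcluster. -/
def IsClusterMarker {X V : Type} [LinearOrder X] (T : XTree X V) (f : Set X → X) : Prop :=
  ∀ A ∈ clSet T,
    ((∃ B ∈ clSet T, B ⊂ A) →
      IsLeast (A \ {y | ∃ B ∈ clSet T, B ⊂ A ∧ f B = y}) (f A)) ∧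
    ((¬ ∃ B ∈ clSet T, B ⊂ A) → IsLeast A (f A))

/-- The marker of a child `c` of an interior vertex: the label of `c` if `c` is a leaf,
and `f (L(c))` if `c` is interior. -/
def markRel {X V : Type} (T : XTree X V) (f : Set X → X) (c : V) (a : X) : Prop :=
  T.leaf a = c ∨ (T.Interior c ∧ a = f (T.leafSet c))

/-- `L_{(T,f)}(v)`: all cords between markers of distinct children of `v`. -/
def lassoAt {X V : Type} (T : XTree X V) (f : Set X → X) (v : V) : Set (Set X) :=
  {c | ∃ c₁ c₂ : V, c₁ ∈ T.children v ∧ c₂ ∈ T.children v ∧ c₁ ≠ c₂ ∧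
    ∃ a b : X, markRel T f c₁ a ∧ markRel T f c₂ b ∧ c = {a, b}}

/-- `L_{(T,f)}`: the union over all interior vertices of `L_{(T,f)}(v)`. -/
def lassoFull {X V : Type} (T : XTree X V) (f : Set X → X) : Set (Set X) :=
  {c | ∃ v : V, T.Interior v ∧ c ∈ lassoAt T f v}

/-- An equidistant proper edge-weighting of `T`, encoded by the height function
`t v` = distance from `v` to any leaf below it (so all leaves are equidistant
from the root); properness: interior edges have positive weight. -/
def EquidistantProper {X V : Type} (T : XTree X V) (t : V → ℝ) : Prop :=
  (∀ x : X, t (T.leaf x) = 0) ∧ (∀ v : V, t v ≤ t (T.parent v)) ∧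
    ∀ v : V, v ≠ T.root → T.Interior v → t v < t (T.parent v)

/-- Equivalence of two `X`-trees: a root-, parent- and labelling-preserving bijection. -/
def TreeEquiv {X V V' : Type} (T : XTree X V) (T' : XTree X V') : Prop :=
  ∃ φ : V ≃ V', φ T.root = T'.root ∧ (∀ v, φ (T.parent v) = T'.parent (φ v)) ∧
    ∀ x, φ (T.leaf x) = T'.leaf x

/-- `S` is (equivalent to) the restriction `T|_Y`: the clusters of `S` are exactly the
nonempty traces on `Y` of the clusters of `T`. -/
def IsRestriction {X : Type} (Y : Set X) {V W : Type}
    (T : XTree X V) (S : XTree (↥Y) W) : Prop :=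
  ∀ A : Set X, A ⊆ Y →
    ((∃ w : W, A = Subtype.val '' S.leafSet w) ↔ (A.Nonempty ∧ ∃ v : V, A = T.leafSet v ∩ Y))

/-- The restriction `L|_Y` of a set of cords of `X` to cords of `Y`. -/
def restrictLasso {X : Type} (Y : Set X) (L : Set (Set X)) : Set (Set ↥Y) :=
  {c | ∃ a b : ↥Y, a ≠ b ∧ c = {a, b} ∧ ({(a : X), (b : X)} : Set X) ∈ L}

section Graph

variable {α : Type} {G : SimpleGraph α}

lemma connected_induce_singleton (a : α) : (G.induce {a}).Connected :=
  (SimpleGraph.connected_iff _).mpr ⟨.of_subsingleton, ⟨⟨a, rfl⟩⟩⟩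

lemma connected_induce_insert {S : Set α} {u s : α} (hS : (G.induce S).Connected) (hs : s ∈ S)
    (hus : G.Adj u s) : (G.induce (insert u S)).Connected :=
  SimpleGraph.connected_induce_union (connected_induce_singleton u).preconnected hS.preconnected
    rfl hs hus

lemma connected_induce_of_isChain :
    ∀ {l : List α}, l ≠ [] → l.IsChain G.Adj → (G.induce {p | p ∈ l}).Connected
  | [a], _, _ => by
    have hset : {p | p ∈ [a]} = {a} := by ext; simp
    exact hset ▸ connected_induce_singleton a
  | a :: b :: l, _, h => by
    rw [List.isChain_cons_cons] at h
    have hset : {p | p ∈ a :: b :: l} = insert a {p | p ∈ b :: l} := by ext; simp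
    rw [hset]
    exact connected_induce_insert (connected_induce_of_isChain (List.cons_ne_nil _ _) h.2)
      List.mem_cons_self h.1

lemma GoodSet.insert {S : Set α} (hS : GoodSet G S) {u s₁ s₂ : α} (hu : u ∉ S)
    (hs₁ : s₁ ∈ S) (hs₂ : s₂ ∈ S) (hs : s₁ ≠ s₂) (h₁ : G.Adj u s₁) (h₂ : G.Adj u s₂) :
    GoodSet G (insert u S) := by
  obtain ⟨-, hconn, hdel⟩ := hS
  refine ⟨Set.insert_nonempty u S, connected_induce_insert hconn hs₁ h₁, fun p hp _ => ?_⟩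
  rcases eq_or_ne p u with rfl | hpu
  · rwa [Set.insert_sdiff_self_of_notMem hu]
  · have hpS : p ∈ S := (Set.mem_insert_iff.mp hp).resolve_left hpu
    rw [Set.insert_sdiff_of_notMem _ (Set.notMem_singleton_iff.mpr hpu.symm)]
    obtain ⟨s, hs, hsp, hus⟩ : ∃ s ∈ S, s ≠ p ∧ G.Adj u s := by
      rcases eq_or_ne s₁ p with rfl | h
      · exact ⟨s₂, hs₂, hs.symm, h₂⟩
      · exact ⟨s₁, hs₁, h, h₁⟩
    exact connected_induce_insert (hdel p hpS ⟨s, hs, hsp⟩) ⟨hs, hsp⟩ hus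

lemma GoodSet.exists_isBlock_superset [Finite α] {C : Set α} (hC : GoodSet G C) :
    ∃ M, IsBlock G M ∧ C ⊆ M := by
  obtain ⟨M, ⟨hM, hCM⟩, hmax⟩ :=
    (Set.toFinite {D | GoodSet G D ∧ C ⊆ D}).exists_maximalFor Set.ncard _ ⟨C, hC, le_rfl⟩
  refine ⟨M, ⟨hM, fun D hD hMD => ?_⟩, hCM⟩
  have hle := hmax ⟨hD, hCM.trans hMD⟩ (Set.ncard_le_ncard hMD (Set.toFinite _))
  exact Set.eq_of_subset_of_ncard_le hMD hle (Set.toFinite _)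

lemma IsBlockGraph.isClique_of_goodSet [Finite α] (hG : IsBlockGraph G) {C : Set α}
    (hC : GoodSet G C) : G.IsClique C := by
  obtain ⟨M, hM, hCM⟩ := hC.exists_isBlock_superset
  exact (hG M hM).subset hCM

lemma IsBlock.mem_of_adj_of_adj {B : Set α} (hB : IsBlock G B) {u s₁ s₂ : α}
    (hs₁ : s₁ ∈ B) (hs₂ : s₂ ∈ B) (hs : s₁ ≠ s₂) (h₁ : G.Adj u s₁) (h₂ : G.Adj u s₂) : u ∈ B := by
  by_contra hu
  have := hB.2 _ (hB.1.insert hu hs₁ hs₂ hs h₁ h₂) (Set.subset_insert u B)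
  exact hu (this ▸ Set.mem_insert u B)

lemma goodSet_of_cycleChain {l : List α} (hl : l ≠ []) (hnd : l.Nodup)
    (hc : Cycle.Chain G.Adj (l : Cycle α)) : GoodSet G {p | p ∈ l} := by
  -- reading the cycle from any vertex `p` on, the other vertices form a path
  have hchain : ∀ {p m}, l ~r p :: m → m.IsChain G.Adj := by
    intro p m hr
    rw [Cycle.coe_eq_coe.mpr hr, Cycle.chain_coe_cons] at hc
    exact (List.isChain_append.mp hc.tail).1
  obtain ⟨a, m, rfl⟩ := List.exists_cons_of_ne_nil hl
  refine ⟨⟨a, List.mem_cons_self⟩, connected_induce_of_isChain hl ?_, fun p hp hne => ?_⟩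
  · rw [Cycle.chain_coe_cons] at hc
    exact (List.isChain_append (l₁ := a :: m) (l₂ := [a])).mp hc |>.1
  obtain ⟨l₁, l₂, hsplit⟩ := List.append_of_mem hp
  have hr : a :: m ~r p :: (l₂ ++ l₁) := hsplit ▸ List.isRotated_append
  have hnd' := hr.nodup_iff.mp hnd
  have hset : {q | q ∈ a :: m} \ {p} = {q | q ∈ l₂ ++ l₁} := by
    ext q
    simp only [Set.mem_sdiff, Set.mem_ofPred_eq, Set.mem_singleton_iff, hr.mem_iff, List.mem_cons]
    constructor
    · rintro ⟨rfl | h, hq⟩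
      exacts [absurd rfl hq, h]
    · exact fun h => ⟨Or.inr h, fun hq => (List.nodup_cons.mp hnd').1 (hq ▸ h)⟩
  rw [hset] at hne ⊢
  exact connected_induce_of_isChain (fun h => by simp [h] at hne) (hchain hr)

end Graph

section Path

variable {α : Type} {G : SimpleGraph α} {S S' : Set α} {a b c d : α} {l l' : List α}

structure IsPathIn (G : SimpleGraph α) (S : Set α) (a b : α) (l : List α) : Prop where
  nodup : l.Nodup
  isChain : l.IsChain G.Adj
  head? : l.head? = some a
  getLast? : l.getLast? = some b
  subset : ∀ p ∈ l, p ∈ S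

lemma IsPathIn.singleton (ha : a ∈ S) : IsPathIn G S a a [a] :=
  ⟨List.nodup_singleton a, List.isChain_singleton a, rfl, rfl, by simpa using ha⟩

lemma IsPathIn.mono (h : IsPathIn G S a b l) (hS : S ⊆ S') : IsPathIn G S' a b l :=
  ⟨h.nodup, h.isChain, h.head?, h.getLast?, fun p hp => hS (h.subset p hp)⟩

lemma IsPathIn.ne_nil (h : IsPathIn G S a b l) : l ≠ [] := by
  rintro rfl
  cases h.head?

lemma IsPathIn.left_mem (h : IsPathIn G S a b l) : a ∈ l :=
  List.mem_of_mem_head? h.head?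

lemma IsPathIn.right_mem (h : IsPathIn G S a b l) : b ∈ l :=
  List.mem_of_getLast? h.getLast?

lemma IsPathIn.append (h : IsPathIn G S a b l) (h' : IsPathIn G S' c d l')
    (hS : Disjoint S S') (hbc : G.Adj b c) :
    IsPathIn G (S ∪ S') a d (l ++ l') where
  nodup := h.nodup.append h'.nodup fun p hp hp' =>
    hS.ne_of_mem (h.subset p hp) (h'.subset p hp') rfl
  isChain := h.isChain.append h'.isChain (by simp [h.getLast?, h'.head?, hbc])
  head? := by rw [List.head?_append_of_ne_nil _ h.ne_nil, h.head?]
  getLast? := by rw [List.getLast?_append_of_ne_nil _ h'.ne_nil, h'.getLast?]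
  subset p hp := (List.mem_append.mp hp).elim (fun hp => .inl (h.subset p hp))
    (fun hp => .inr (h'.subset p hp))

lemma IsPathIn.goodSet_of_adj (h : IsPathIn G S a b l) (hba : G.Adj b a) :
    GoodSet G {p | p ∈ l} := by
  refine goodSet_of_cycleChain h.ne_nil h.nodup ?_
  obtain ⟨c, m, rfl⟩ := List.exists_cons_of_ne_nil h.ne_nil
  obtain rfl : c = a := Option.some_injective _ h.head?
  rw [Cycle.chain_coe_cons, ← List.cons_append]
  exact h.isChain.append (List.isChain_singleton _) (by simp [h.getLast?, hba])

end Path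

namespace XTree

variable {X V : Type} (T : XTree X V) {L : Set (Set X)} {u v w c c₁ c₂ d : V}

lemma desc_refl (v : V) : T.Desc v v := ⟨0, rfl⟩

variable {T}

lemma Desc.trans (h₁ : T.Desc u v) (h₂ : T.Desc v w) : T.Desc u w := by
  obtain ⟨n, rfl⟩ := h₁
  obtain ⟨m, rfl⟩ := h₂
  exact ⟨n + m, Function.iterate_add_apply _ _ _ _⟩

lemma desc_of_mem_children (hc : c ∈ T.children v) : T.Desc v c := ⟨1, hc.1⟩

lemma eq_root_of_isPeriodicPt {k : ℕ} (hk : k ≠ 0) (h : Function.IsPeriodicPt T.parent k v) :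
    v = T.root := by
  obtain ⟨n, hn⟩ := T.reaches v
  have hle : n ≤ n * k := Nat.le_mul_of_pos_right n (Nat.pos_of_ne_zero hk)
  calc v = T.parent^[n * k] v := (h.const_mul n).symm
    _ = T.parent^[n * k - n] (T.parent^[n] v) := by
      rw [← Function.iterate_add_apply, Nat.sub_add_cancel hle]
    _ = T.root := by rw [hn, Function.iterate_fixed T.parent_root]

lemma Desc.antisymm (h₁ : T.Desc u v) (h₂ : T.Desc v u) : u = v := by
  obtain ⟨n, hn⟩ := h₁
  obtain ⟨m, hm⟩ := h₂
  rcases eq_or_ne (n + m) 0 with h | h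
  · rw [Nat.add_eq_zero_iff.mp h |>.1] at hn
    exact hn.symm
  · have hu : u = T.root := eq_root_of_isPeriodicPt h (by
      rw [Function.IsPeriodicPt, Function.IsFixedPt, Function.iterate_add_apply, hm, hn])
    rw [← hm, hu, Function.iterate_fixed T.parent_root]

lemma Desc.total_of_desc (h₁ : T.Desc u w) (h₂ : T.Desc v w) : T.Desc u v ∨ T.Desc v u := by
  obtain ⟨n, rfl⟩ := h₁
  obtain ⟨m, hm⟩ := h₂
  rcases le_total n m with h | h
  · obtain ⟨d, rfl⟩ := Nat.exists_eq_add_of_le h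
    exact .inr ⟨d, by rw [← hm, add_comm, Function.iterate_add_apply]⟩
  · obtain ⟨d, rfl⟩ := Nat.exists_eq_add_of_le h
    exact .inl ⟨d, by rw [← hm, add_comm, Function.iterate_add_apply]⟩

lemma eq_of_desc_of_mem_children (hc₁ : c₁ ∈ T.children v) (hc₂ : c₂ ∈ T.children v)
    (h : T.Desc c₁ c₂) : c₁ = c₂ := by
  obtain ⟨_ | k, hk⟩ := h
  · exact hk.symm
  · rw [Function.iterate_succ_apply, hc₂.1] at hk
    exact absurd (Desc.antisymm ⟨k, hk⟩ (desc_of_mem_children hc₁)) hc₁.2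

lemma eq_of_desc_of_desc_of_mem_children (hc₁ : c₁ ∈ T.children v) (hc₂ : c₂ ∈ T.children v)
    (h₁ : T.Desc c₁ w) (h₂ : T.Desc c₂ w) : c₁ = c₂ :=
  (h₁.total_of_desc h₂).elim (eq_of_desc_of_mem_children hc₁ hc₂)
    fun h => (eq_of_desc_of_mem_children hc₂ hc₁ h).symm

lemma disjoint_leafSet_of_mem_children (hc₁ : c₁ ∈ T.children v) (hc₂ : c₂ ∈ T.children v)
    (hc : c₁ ≠ c₂) : Disjoint (T.leafSet c₁) (T.leafSet c₂) :=
  Set.disjoint_left.mpr fun _ h₁ h₂ => hc (eq_of_desc_of_desc_of_mem_children hc₁ hc₂ h₁ h₂)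

lemma exists_mem_children_desc (h : T.Desc v u) (hne : u ≠ v) :
    ∃ c ∈ T.children v, T.Desc c u := by
  obtain ⟨n, hn⟩ := h
  induction n generalizing u with
  | zero => exact absurd hn hne
  | succ n ih =>
    by_cases hw : T.parent^[n] u = v
    · exact ih hne hw
    · rw [Function.iterate_succ_apply'] at hn
      exact ⟨_, ⟨hn, hw⟩, ⟨n, rfl⟩⟩

lemma exists_mem_children_mem_leafSet {x : X} (hv : T.Interior v) (hx : x ∈ T.leafSet v) :
    ∃ c ∈ T.children v, x ∈ T.leafSet c :=
  exists_mem_children_desc hx fun h => hv ⟨x, h⟩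

lemma leafSet_subset_of_mem_children (hc : c ∈ T.children v) : T.leafSet c ⊆ T.leafSet v :=
  fun _ hx => (desc_of_mem_children hc).trans hx

lemma eq_of_desc_leaf {x : X} (h : T.Desc (T.leaf x) w) : w = T.leaf x := by
  obtain ⟨n, hn⟩ := h
  induction n generalizing w with
  | zero => exact hn
  | succ n ih =>
    rw [Function.iterate_succ_apply] at hn
    exact (T.leaf_iff _).mpr ⟨x, rfl⟩ w (ih hn)

lemma interior_of_mem_leafSet_of_ne {x y : X} (hx : x ∈ T.leafSet v) (hy : y ∈ T.leafSet v)
    (hxy : x ≠ y) : T.Interior v := by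
  rintro ⟨z, rfl⟩
  exact hxy (T.leaf_inj ((eq_of_desc_leaf hx).trans (eq_of_desc_leaf hy).symm))

lemma eq_of_desc_of_separates {x y : X} (hvw : T.Desc v w) (hc₁ : c₁ ∈ T.children v)
    (hc₂ : c₂ ∈ T.children v) (hc : c₁ ≠ c₂) (hx : x ∈ T.leafSet c₁) (hy : y ∈ T.leafSet c₂)
    (hxw : x ∈ T.leafSet w) (hyw : y ∈ T.leafSet w) : w = v := by
  by_contra hne
  obtain ⟨e, he, hew⟩ := exists_mem_children_desc hvw hne
  exact hc ((eq_of_desc_of_desc_of_mem_children hc₁ he hx (hew.trans hxw)).trans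
    (eq_of_desc_of_desc_of_mem_children he hc₂ (hew.trans hyw) hy))

lemma eq_of_separates {d₁ d₂ : V} {x y : X} (hc₁ : c₁ ∈ T.children v) (hc₂ : c₂ ∈ T.children v)
    (hc : c₁ ≠ c₂) (hx : x ∈ T.leafSet c₁) (hy : y ∈ T.leafSet c₂)
    (hd₁ : d₁ ∈ T.children w) (hd₂ : d₂ ∈ T.children w) (hd : d₁ ≠ d₂)
    (hx' : x ∈ T.leafSet d₁) (hy' : y ∈ T.leafSet d₂) : v = w :=
  (Desc.total_of_desc (leafSet_subset_of_mem_children hc₁ hx)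
      (leafSet_subset_of_mem_children hd₁ hx')).elim
    (fun h => (eq_of_desc_of_separates h hc₁ hc₂ hc hx hy (leafSet_subset_of_mem_children hd₁ hx')
      (leafSet_subset_of_mem_children hd₂ hy')).symm)
    (fun h => eq_of_desc_of_separates h hd₁ hd₂ hd hx' hy' (leafSet_subset_of_mem_children hc₁ hx)
      (leafSet_subset_of_mem_children hc₂ hy))

lemma ncard_desc_lt_of_mem_children [Finite V] (hc : c ∈ T.children v) :
    {w | T.Desc c w}.ncard < {w | T.Desc v w}.ncard :=
  Set.ncard_lt_ncard ⟨fun _ hw => (desc_of_mem_children hc).trans hw,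
    fun h => hc.2 ((h (T.desc_refl v)).antisymm (desc_of_mem_children hc))⟩ (Set.toFinite _)

lemma IsTopoLasso.exists_isPathIn [Finite V] (hL : T.IsTopoLasso L) {a b : X}
    (ha : a ∈ T.leafSet u) (hb : b ∈ T.leafSet u) :
    ∃ l, IsPathIn (cordGraph L) (T.leafSet u) a b l := by
  induction hn : {w | T.Desc u w}.ncard using Nat.strong_induction_on generalizing u a b with
  | _ n ih =>
  have ih' : ∀ c ∈ T.children u, ∀ {a b : X}, a ∈ T.leafSet c → b ∈ T.leafSet c →
      ∃ l, IsPathIn (cordGraph L) (T.leafSet c) a b l :=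
    fun c hc _ _ ha hb => ih _ (hn ▸ ncard_desc_lt_of_mem_children hc) ha hb rfl
  rcases eq_or_ne a b with rfl | hab
  · exact ⟨[a], .singleton ha⟩
  have hu := interior_of_mem_leafSet_of_ne ha hb hab
  obtain ⟨ca, hca, ha⟩ := exists_mem_children_mem_leafSet hu ha
  obtain ⟨cb, hcb, hb⟩ := exists_mem_children_mem_leafSet hu hb
  rcases eq_or_ne ca cb with rfl | hcab
  · obtain ⟨l, hl⟩ := ih' ca hca ha hb
    exact ⟨l, hl.mono (leafSet_subset_of_mem_children hca)⟩
  have hdisj := disjoint_leafSet_of_mem_children hca hcb hcab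
  obtain ⟨p, q, hp, hq, hpq⟩ := hL u ca cb hca hcb hcab
  obtain ⟨l₁, h₁⟩ := ih' ca hca ha hp
  obtain ⟨l₂, h₂⟩ := ih' cb hcb hq hb
  exact ⟨l₁ ++ l₂, (h₁.append h₂ hdisj ⟨hdisj.ne_of_mem hp hq, hpq⟩).mono
    (Set.union_subset (leafSet_subset_of_mem_children hca) (leafSet_subset_of_mem_children hcb))⟩

lemma IsMinTopoLasso.exists_children_unique_cord_of_mem (hmin : T.IsMinTopoLasso L) {e : Set X}
    (he : e ∈ L) :
    ∃ w d₁ d₂, d₁ ∈ T.children w ∧ d₂ ∈ T.children w ∧ d₁ ≠ d₂ ∧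
      ∃ p ∈ T.leafSet d₁, ∃ q ∈ T.leafSet d₂, e = {p, q} ∧
        ∀ a ∈ T.leafSet d₁, ∀ b ∈ T.leafSet d₂, {a, b} ∈ L → {a, b} = e := by
  have hnot : ¬ T.IsTopoLasso (L \ {e}) := by
    intro h
    rw [← hmin.2 _ Set.sdiff_subset h] at he
    exact he.2 rfl
  simp only [IsTopoLasso, not_forall, exists_prop] at hnot
  obtain ⟨w, d₁, d₂, hd₁, hd₂, hd, hnone⟩ := hnot
  have heq : ∀ a ∈ T.leafSet d₁, ∀ b ∈ T.leafSet d₂, {a, b} ∈ L → {a, b} = e :=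
    fun a ha b hb hab => by_contra fun hne => hnone ⟨a, b, ha, hb, hab, hne⟩
  obtain ⟨p, q, hp, hq, hpq⟩ := hmin.1 w d₁ d₂ hd₁ hd₂ hd
  exact ⟨w, d₁, d₂, hd₁, hd₂, hd, p, hp, q, hq, (heq p hp q hq hpq).symm, heq⟩

lemma IsMinTopoLasso.pair_eq_of_mem_leafSet (hmin : T.IsMinTopoLasso L)
    (hc₁ : c₁ ∈ T.children v) (hc₂ : c₂ ∈ T.children v) (hc : c₁ ≠ c₂) {a b a' b' : X}
    (ha : a ∈ T.leafSet c₁) (hb : b ∈ T.leafSet c₂) (hab : {a, b} ∈ L)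
    (ha' : a' ∈ T.leafSet c₁) (hb' : b' ∈ T.leafSet c₂) (hab' : {a', b'} ∈ L) :
    ({a', b'} : Set X) = {a, b} := by
  obtain ⟨w, d₁, d₂, hd₁, hd₂, hd, p, hp, q, hq, he, huniq⟩ :=
    hmin.exists_children_unique_cord_of_mem hab
  rcases Set.pair_eq_pair_iff.mp he with ⟨rfl, rfl⟩ | ⟨rfl, rfl⟩
  · obtain rfl := eq_of_separates hc₁ hc₂ hc ha hb hd₁ hd₂ hd hp hq
    obtain rfl := eq_of_desc_of_desc_of_mem_children hd₁ hc₁ hp ha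
    obtain rfl := eq_of_desc_of_desc_of_mem_children hd₂ hc₂ hq hb
    exact huniq a' ha' b' hb' hab'
  · obtain rfl := eq_of_separates hc₂ hc₁ hc.symm hb ha hd₁ hd₂ hd hp hq
    obtain rfl := eq_of_desc_of_desc_of_mem_children hd₁ hc₂ hp hb
    obtain rfl := eq_of_desc_of_desc_of_mem_children hd₂ hc₁ hq ha
    rw [Set.pair_comm a']
    exact huniq b' hb' a' ha' (Set.pair_comm a' b' ▸ hab')

lemma IsLCA.exists_notMem_leafSet {B : Set X} (hlca : T.IsLCA v (T.leaf '' B))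
    (hc : c ∈ T.children v) : ∃ z ∈ B, z ∉ T.leafSet c := by
  by_contra! h
  have hcv : T.Desc c v := hlca.2 c (by rintro _ ⟨z, hz, rfl⟩; exact h z hz)
  exact hc.2 (hcv.antisymm (desc_of_mem_children hc))

lemma IsLCA.mem_leafSet {B : Set X} (hlca : T.IsLCA v (T.leaf '' B)) {x : X} (hx : x ∈ B) :
    x ∈ T.leafSet v :=
  hlca.1 _ ⟨x, hx, rfl⟩

lemma IsMinTopoLasso.eq_of_mem_leafSet_of_isClique (hmin : T.IsMinTopoLasso L) {B : Set X}
    (hB : (cordGraph L).IsClique B) (hlca : T.IsLCA v (T.leaf '' B)) (hc : c ∈ T.children v)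
    {x y : X} (hx : x ∈ B) (hy : y ∈ B) (hxc : x ∈ T.leafSet c) (hyc : y ∈ T.leafSet c) :
    x = y := by
  by_contra hxy
  obtain ⟨z, hz, hzc⟩ := hlca.exists_notMem_leafSet hc
  have hxz : x ≠ z := fun h => hzc (h ▸ hxc)
  have hyz : y ≠ z := fun h => hzc (h ▸ hyc)
  obtain ⟨c', hc', hzc'⟩ := exists_mem_children_mem_leafSet
    (interior_of_mem_leafSet_of_ne (hlca.mem_leafSet hx) (hlca.mem_leafSet hz) hxz)
    (hlca.mem_leafSet hz)
  have hcc' : c ≠ c' := by rintro rfl; exact hzc hzc'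
  have := hmin.pair_eq_of_mem_leafSet hc hc' hcc' hxc hzc' (hB hx hz hxz).2 hyc hzc'
    (hB hy hz hyz).2
  rcases Set.pair_eq_pair_iff.mp this with ⟨h, -⟩ | ⟨h, -⟩
  exacts [hxy h.symm, hyz h]

lemma IsTopoLasso.exists_mem_block_of_mem_children [Finite X] [Finite V]
    (hL : T.IsTopoLasso L) (hbg : IsBlockGraph (cordGraph L)) {B : Set X}
    (hB : IsBlock (cordGraph L) B) (hc₁ : c₁ ∈ T.children v) (hc₂ : c₂ ∈ T.children v)
    (hd : d ∈ T.children v) (h₁₂ : c₁ ≠ c₂) (h₁d : c₁ ≠ d) (h₂d : c₂ ≠ d) {x y : X}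
    (hx : x ∈ B) (hy : y ∈ B) (hxc : x ∈ T.leafSet c₁) (hyc : y ∈ T.leafSet c₂) :
    ∃ z ∈ B, z ∈ T.leafSet d := by
  have h12 := disjoint_leafSet_of_mem_children hc₁ hc₂ h₁₂
  have h1d := disjoint_leafSet_of_mem_children hc₁ hd h₁d
  have hd2 := disjoint_leafSet_of_mem_children hd hc₂ h₂d.symm
  have hxy : x ≠ y := h12.ne_of_mem hxc hyc
  obtain ⟨p₁, q₁, hp₁, hq₁, h₁⟩ := hL v c₁ d hc₁ hd h₁d
  obtain ⟨q₂, p₂, hq₂, hp₂, h₂⟩ := hL v d c₂ hd hc₂ h₂d.symm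
  obtain ⟨l₁, hl₁⟩ := hL.exists_isPathIn hxc hp₁
  obtain ⟨l₂, hl₂⟩ := hL.exists_isPathIn hq₁ hq₂
  obtain ⟨l₃, hl₃⟩ := hL.exists_isPathIn hp₂ hyc
  have hl := (hl₁.append hl₂ h1d ⟨h1d.ne_of_mem hp₁ hq₁, h₁⟩).append hl₃
    (h12.union_left hd2) ⟨hd2.ne_of_mem hq₂ hp₂, h₂⟩
  -- closing the path `x → q₁ → y` with the edge `yx` gives a cycle, hence a clique
  have hcl := hbg.isClique_of_goodSet (hl.goodSet_of_adj (hbg B hB hy hx hxy.symm))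
  have hq₁l : q₁ ∈ l₁ ++ l₂ ++ l₃ := List.mem_append_left _ (List.mem_append_right _ hl₂.left_mem)
  refine ⟨q₁, hB.mem_of_adj_of_adj hx hy hxy (hcl hq₁l hl.left_mem ?_) (hcl hq₁l hl.right_mem ?_),
    hq₁⟩
  exacts [(h1d.ne_of_mem hxc hq₁).symm, hd2.ne_of_mem hq₁ hyc]

lemma IsTopoLasso.exists_mem_leafSet_of_isLCA [Finite X] [Finite V] (hL : T.IsTopoLasso L)
    (hbg : IsBlockGraph (cordGraph L)) {B : Set X} (hB : IsBlock (cordGraph L) B)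
    (hlca : T.IsLCA v (T.leaf '' B)) (hv : T.Interior v) (hd : d ∈ T.children v) :
    ∃ x ∈ B, x ∈ T.leafSet d := by
  obtain ⟨x, hx⟩ := hB.1.1
  obtain ⟨c₁, hc₁, hxc⟩ := exists_mem_children_mem_leafSet hv (hlca.mem_leafSet hx)
  obtain ⟨y, hy, hyc₁⟩ := hlca.exists_notMem_leafSet hc₁
  obtain ⟨c₂, hc₂, hyc⟩ := exists_mem_children_mem_leafSet hv (hlca.mem_leafSet hy)
  rcases eq_or_ne c₁ d with rfl | h₁d
  · exact ⟨x, hx, hxc⟩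
  rcases eq_or_ne c₂ d with rfl | h₂d
  · exact ⟨y, hy, hyc⟩
  exact hL.exists_mem_block_of_mem_children hbg hB hc₁ hc₂ hd (by rintro rfl; exact hyc₁ hyc)
    h₁d h₂d hx hy hxc hyc

end XTree

theorem stmt13_general {X V : Type} [Fintype X] [Fintype V] (T : XTree X V) (L : Set (Set X))
    (hmin : T.IsMinTopoLasso L) (hbg : IsBlockGraph (cordGraph L))
    (v : V) (hv : T.Interior v) (B : Set X)
    (hB : IsBlock (cordGraph L) B) (hlca : T.IsLCA v (T.leaf '' B)) :
    ∃ φ : {x : X // x ∈ B} → {c : V // c ∈ T.children v},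
      (∀ x : {x : X // x ∈ B}, (x : X) ∈ T.leafSet ((φ x) : V)) ∧
      Function.Bijective φ ∧
      ∀ x y : {x : X // x ∈ B},
        ((cordGraph L).induce B).Adj x y ↔ (childGraph T L v).Adj (φ x) (φ y) := by
  have hcl := hbg B hB
  have hchild (x : B) : ∃ c : T.children v, (x : X) ∈ T.leafSet c :=
    let ⟨c, hc, hxc⟩ := XTree.exists_mem_children_mem_leafSet hv (hlca.mem_leafSet x.2)
    ⟨⟨c, hc⟩, hxc⟩
  choose φ hφ using hchild
  have hinj : Function.Injective φ := fun x y h =>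
    Subtype.ext (hmin.eq_of_mem_leafSet_of_isClique hcl hlca (φ x).2 x.2 y.2 (hφ x) (h ▸ hφ y))
  refine ⟨φ, hφ, ⟨hinj, fun d => ?_⟩, fun x y => ?_⟩
  · obtain ⟨x, hx, hxd⟩ := hmin.1.exists_mem_leafSet_of_isLCA hbg hB hlca hv d.2
    exact ⟨⟨x, hx⟩, Subtype.ext (XTree.eq_of_desc_of_desc_of_mem_children (φ _).2 d.2 (hφ _) hxd)⟩
  · exact ⟨fun ⟨hxy, hxyL⟩ => ⟨hinj.ne (Subtype.coe_ne_coe.mp hxy), x, y, hφ x, hφ y, hxyL⟩,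
      fun ⟨hne, _⟩ => hcl x.2 y.2 (Subtype.coe_ne_coe.mpr (ne_of_apply_ne φ hne))⟩

/-- for a minimal topological lasso `L` with `Γ(L)` a block graph and an
interior vertex `v` with block `B_v`, the map sending `x ∈ V(B_v)` to the child of `v`
whose subtree contains `x` is a graph isomorphism from `B_v` onto `G(L,v)`. -/
theorem stmt13 {X V : Type} [Fintype X] [Fintype V] (T : XTree X V)
    (hph : T.IsPhylo) (hX : 3 ≤ Fintype.card X)
    (L : Set (Set X)) (hc : ∀ c ∈ L, IsCord c) (hcov : ∀ x : X, ∃ c ∈ L, x ∈ c)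
    (hmin : T.IsMinTopoLasso L) (hbg : IsBlockGraph (cordGraph L))
    (v : V) (hv : T.Interior v) (B : Set X)
    (hB : IsBlock (cordGraph L) B) (hlca : T.IsLCA v (T.leaf '' B)) :
    ∃ φ : {x : X // x ∈ B} → {c : V // c ∈ T.children v},
      (∀ x : {x : X // x ∈ B}, (x : X) ∈ T.leafSet ((φ x) : V)) ∧
      Function.Bijective φ ∧
      ∀ x y : {x : X // x ∈ B},
        ((cordGraph L).induce B).Adj x y ↔ (childGraph T L v).Adj (φ x) (φ y) :=
  stmt13_general T L hmin hbg v hv B hB hlca
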